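/- Let P be a consensus matrix with maximum out-degree δ_out (excluding self-loops) in its directed graph. Then for all nodes u, v, (1/(4δ_out − 2)) R_{uv}(G(P)) ≤ R_{uv}(G(P*P)) ≤ R_{uv}(G(P)), where R denotes effective resistance with unit conductances. -/

import Mathlib

open Matrix

/-- A consensus matrix: entrywise nonnegative, row-stochastic, irreducible
(for every pair of indices some power has a positive entry), with positive diagonal. -/
def IsConsensus {n : ℕ} (P : Matrix (Fin n) (Fin n) ℝ) : Prop :=
  (∀ i j, 0 ≤ P i j) ∧ (∀ i, (∑ j, P i j) = 1) ∧
  (∀ i j, ∃ k : ℕ, 0 < (P ^ k) i j) ∧ (∀ i, 0 < P i i)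

/-- `mu` is the invariant measure of `P`: strictly positive, sums to `1`,
and is a left fixed vector of `P`. -/
def IsInvMeasure {n : ℕ} (P : Matrix (Fin n) (Fin n) ℝ) (mu : Fin n → ℝ) : Prop :=
  (∀ i, 0 < mu i) ∧ (∑ i, mu i) = 1 ∧ (∀ j, (∑ i, mu i * P i j) = mu j)

/-- The time reversal `P* = Π⁻¹ Pᵀ Π` with `Π = diag(mu)`. -/
noncomputable def Pstar {n : ℕ} (P : Matrix (Fin n) (Fin n) ℝ) (mu : Fin n → ℝ) :
    Matrix (Fin n) (Fin n) ℝ :=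
  Matrix.diagonal (fun i => (mu i)⁻¹) * Pᵀ * Matrix.diagonal mu

/-- The graph Laplacian `L(C) = diag(C 𝟙) − C`. -/
def lap {n : ℕ} (C : Matrix (Fin n) (Fin n) ℝ) : Matrix (Fin n) (Fin n) ℝ :=
  Matrix.diagonal (fun i => ∑ j, C i j) - C

/-- A conductance matrix: symmetric, entrywise nonnegative, irreducible. -/
def IsConductance {n : ℕ} (C : Matrix (Fin n) (Fin n) ℝ) : Prop :=
  Cᵀ = C ∧ (∀ i j, 0 ≤ C i j) ∧ (∀ i j, ∃ k : ℕ, 0 < (C ^ k) i j)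

/-- The effective resistance between `a` and `b`: `v a - v b` for a solution `v`
of `L(C) v = e_a - e_b` (junk value `0` if no solution exists). -/
noncomputable def effRes {n : ℕ} (C : Matrix (Fin n) (Fin n) ℝ) (a b : Fin n) : ℝ :=
  open Classical in
  if h : ∃ v : Fin n → ℝ, lap C *ᵥ v = Pi.single a 1 - Pi.single b 1 then
    h.choose a - h.choose b
  else 0

/-- The average effective resistance `(1/(2 n²)) Σ_{u,v} R_{uv}(C)`. -/
noncomputable def avgRes {n : ℕ} (C : Matrix (Fin n) (Fin n) ℝ) : ℝ :=
  (1 / (2 * (n : ℝ) ^ 2)) * ∑ u, ∑ v, effRes C u v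

/-- The unit-conductance matrix of the undirected graph associated with `P`:
edge `{u,v}` iff `P u v ≠ 0` or `P v u ≠ 0`. -/
noncomputable def adjMat {n : ℕ} (P : Matrix (Fin n) (Fin n) ℝ) : Matrix (Fin n) (Fin n) ℝ :=
  Matrix.of fun i j => if i ≠ j ∧ (P i j ≠ 0 ∨ P j i ≠ 0) then (1 : ℝ) else 0

/-- The LQ cost `J(P) = (1/n) Σ_{t≥0} ‖P^t − 𝟙 muᵀ‖_F²`. -/
noncomputable def LQcost {n : ℕ} (P : Matrix (Fin n) (Fin n) ℝ) (mu : Fin n → ℝ) : ℝ :=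
  (1 / (n : ℝ)) *
    ∑' t : ℕ, ∑ i, ∑ j,
      ((P ^ t - Matrix.vecMulVec (fun _ => 1) mu : Matrix (Fin n) (Fin n) ℝ) i j) ^ 2

/-- The weighted LQ cost `J_w(P)`. -/
noncomputable def LQcostW {n : ℕ} (P : Matrix (Fin n) (Fin n) ℝ) (mu : Fin n → ℝ) : ℝ :=
  ∑' t : ℕ, Matrix.trace ((1 - Matrix.vecMulVec mu (fun _ => 1)) * Pᵀ ^ t *
    Matrix.diagonal mu * P ^ t * (1 - Matrix.vecMulVec (fun _ => 1) mu))

/-- The Green matrix `G(P) = Σ_{t≥0} (P^t − 𝟙 muᵀ)`. -/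
noncomputable def Green {n : ℕ} (P : Matrix (Fin n) (Fin n) ℝ) (mu : Fin n → ℝ) :
    Matrix (Fin n) (Fin n) ℝ :=
  ∑' t : ℕ, (P ^ t - Matrix.vecMulVec (fun _ => 1) mu)

/-- Out-degree (excluding self-loops) of node `i` in the directed graph of `P`. -/
noncomputable def outDeg {n : ℕ} (P : Matrix (Fin n) (Fin n) ℝ) (i : Fin n) : ℕ :=
  (Finset.univ.filter fun j => j ≠ i ∧ P i j ≠ 0).card

/-- In-degree (excluding self-loops) of node `j` in the directed graph of `P`. -/
noncomputable def inDeg {n : ℕ} (P : Matrix (Fin n) (Fin n) ℝ) (j : Fin n) : ℕ :=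
  (Finset.univ.filter fun i => i ≠ j ∧ P i j ≠ 0).card

/-!
Write `E_C(f) = ∑ᵢ ∑ⱼ C i j (f i - f j)²` for the Dirichlet energy of a symmetric conductance
matrix `C`, and `x` for a potential with `L(C) x = e_u - e_v`. By Cauchy–Schwarz for the energy
form, `2 (f u - f v)² ≤ R_{uv}(C) E_C(f)` for every `f` (Dirichlet principle), with equality at
`f = x`. Hence `E_{C'} ≤ κ E_C` implies `R_{uv}(C) ≤ κ R_{uv}(C')`.

Because `P` has a positive diagonal, every edge of `G(P)` is an edge of `G(P*P)`, which gives
the upper bound with `κ = 1`. Conversely, an edge `{u,v}` of `G(P*P)` has a pivot `w` with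
`u, v ∈ N̄(w) = {w} ∪ N_out(w)`, so `E_{G(P*P)}(f)` is at most the sum over `w` of
`∑_{u,v ∈ N̄(w)} (f u - f v)²`. Applying `(a - b)² ≤ 2a² + 2b²` to `f - f w` bounds this by
`(4 |N_out(w)| - 2) ∑_{v ∈ N_out(w)} (f w - f v)²`, and summing over `w` gives
`E_{G(P*P)} ≤ (4 δ_out - 2) E_{G(P)}`.
-/

section DirichletEnergy

variable {ι : Type*} [Fintype ι]

def dirichletEnergy (C : Matrix ι ι ℝ) (f : ι → ℝ) : ℝ :=
  ∑ i, ∑ j, C i j * (f i - f j) ^ 2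

lemma dirichletEnergy_nonneg {C : Matrix ι ι ℝ} (hC : ∀ i j, 0 ≤ C i j) (f : ι → ℝ) :
    0 ≤ dirichletEnergy C f :=
  Finset.sum_nonneg fun i _ => Finset.sum_nonneg fun j _ => mul_nonneg (hC i j) (sq_nonneg _)

lemma dirichletEnergy_mono {C C' : Matrix ι ι ℝ} (h : ∀ i j, C i j ≤ C' i j) (f : ι → ℝ) :
    dirichletEnergy C f ≤ dirichletEnergy C' f :=
  Finset.sum_le_sum fun i _ => Finset.sum_le_sum fun j _ =>
    mul_le_mul_of_nonneg_right (h i j) (sq_nonneg _)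

lemma sq_sum_mul_sub_mul_sub_le {C : Matrix ι ι ℝ} (hC : ∀ i j, 0 ≤ C i j) (f g : ι → ℝ) :
    (∑ i, ∑ j, C i j * (f i - f j) * (g i - g j)) ^ 2 ≤
      dirichletEnergy C f * dirichletEnergy C g := by
  simp only [dirichletEnergy, ← Fintype.sum_prod_type']
  exact Finset.sum_sq_le_sum_mul_sum_of_sq_le_mul _
    (fun p _ => mul_nonneg (hC _ _) (sq_nonneg _)) (fun p _ => mul_nonneg (hC _ _) (sq_nonneg _))
    fun p _ => le_of_eq (by ring)

end DirichletEnergy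

lemma sum_sum_sq_sub_le {ι : Type*} (t : Finset ι) (g : ι → ℝ) :
    ∑ u ∈ t, ∑ v ∈ t, (g u - g v) ^ 2 ≤ 4 * (t.card - 1) * ∑ u ∈ t, g u ^ 2 := by
  classical
  calc ∑ u ∈ t, ∑ v ∈ t, (g u - g v) ^ 2
      ≤ ∑ u ∈ t, ∑ v ∈ t, (2 * g u ^ 2 + 2 * g v ^ 2 - if u = v then 4 * g u ^ 2 else 0) := by
        gcongr with u _ v _
        split_ifs with huv
        · subst huv
          nlinarith
        · nlinarith [sq_nonneg (g u + g v)]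
    _ = 4 * (t.card - 1) * ∑ u ∈ t, g u ^ 2 := by
        simp [Finset.sum_sub_distrib, Finset.sum_add_distrib, Finset.sum_ite_eq, ← Finset.mul_sum]
        ring

lemma sum_insert_sum_insert_sq_sub_le {ι : Type*} [DecidableEq ι] (f : ι → ℝ) {w : ι}
    {t : Finset ι} (hw : w ∉ t) :
    ∑ u ∈ insert w t, ∑ v ∈ insert w t, (f u - f v) ^ 2 ≤
      (4 * t.card - 2) * ∑ v ∈ t, (f w - f v) ^ 2 := by
  have h := sum_sum_sq_sub_le t (fun v => f v - f w)
  simp only [sub_sub_sub_cancel_right, sub_sq_comm (f _) (f w)] at h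
  simp only [Finset.sum_insert hw, sub_self, ne_eq, OfNat.ofNat_ne_zero, not_false_eq_true,
    zero_pow, zero_add, Finset.sum_add_distrib, sub_sq_comm (f _) (f w)]
  linarith

lemma eq_of_pow_apply_ne_zero {ι R α : Type*} [Fintype ι] [DecidableEq ι] [Semiring R]
    {P : Matrix ι ι R} {f : ι → α} (hf : ∀ i j, P i j ≠ 0 → f i = f j) (k : ℕ) {i j : ι}
    (h : (P ^ k) i j ≠ 0) : f i = f j := by
  induction k generalizing j with
  | zero =>
    rw [pow_zero, one_apply] at h
    split_ifs at h with hij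
    · rw [hij]
    · exact absurd rfl h
  | succ k ih =>
    rw [pow_succ, mul_apply] at h
    obtain ⟨w, -, hw⟩ := Finset.exists_ne_zero_of_sum_ne_zero h
    exact (ih (left_ne_zero_of_mul hw)).trans (hf w j (right_ne_zero_of_mul hw))

lemma eq_of_irreducible {ι α : Type*} [Fintype ι] [DecidableEq ι] {P : Matrix ι ι ℝ}
    (hirr : ∀ i j, ∃ k : ℕ, 0 < (P ^ k) i j) {f : ι → α}
    (hf : ∀ i j, P i j ≠ 0 → f i = f j) (i j : ι) : f i = f j :=
  let ⟨k, hk⟩ := hirr i j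
  eq_of_pow_apply_ne_zero hf k hk.ne'

section Laplacian

variable {n : ℕ}

lemma lap_mulVec (C : Matrix (Fin n) (Fin n) ℝ) (g : Fin n → ℝ) (i : Fin n) :
    (lap C *ᵥ g) i = ∑ j, C i j * (g i - g j) := by
  simp only [lap, sub_mulVec, Pi.sub_apply, mulVec_diagonal]
  simp [mulVec, dotProduct, mul_sub, Finset.sum_sub_distrib, Finset.mul_sum, mul_comm]

lemma lap_transpose {C : Matrix (Fin n) (Fin n) ℝ} (hC : Cᵀ = C) : (lap C)ᵀ = lap C := by
  rw [lap, transpose_sub, diagonal_transpose, hC]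

lemma two_mul_dotProduct_lap_mulVec {C : Matrix (Fin n) (Fin n) ℝ} (hC : Cᵀ = C)
    (f g : Fin n → ℝ) :
    2 * (f ⬝ᵥ lap C *ᵥ g) = ∑ i, ∑ j, C i j * (f i - f j) * (g i - g j) := by
  have hswap : ∑ i, ∑ j, C i j * (f j * (g i - g j)) =
      -∑ i, ∑ j, C i j * (f i * (g i - g j)) := by
    rw [Finset.sum_comm, ← Finset.sum_neg_distrib]
    refine Finset.sum_congr rfl fun i _ => ?_
    rw [← Finset.sum_neg_distrib]
    refine Finset.sum_congr rfl fun j _ => ?_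
    rw [← congrFun (congrFun hC i) j, transpose_apply]
    ring
  have hsplit : ∑ i, ∑ j, C i j * (f i - f j) * (g i - g j) =
      ∑ i, ∑ j, C i j * (f i * (g i - g j)) - ∑ i, ∑ j, C i j * (f j * (g i - g j)) := by
    simp only [← Finset.sum_sub_distrib]
    exact Finset.sum_congr rfl fun i _ => Finset.sum_congr rfl fun j _ => by ring
  have hdot : f ⬝ᵥ lap C *ᵥ g = ∑ i, ∑ j, C i j * (f i * (g i - g j)) := by
    simp only [dotProduct, lap_mulVec, Finset.mul_sum]
    exact Finset.sum_congr rfl fun i _ => Finset.sum_congr rfl fun j _ => by ring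
  rw [hsplit, hswap, hdot]
  ring

lemma dirichletEnergy_eq_two_mul {C : Matrix (Fin n) (Fin n) ℝ} (hC : Cᵀ = C)
    (f : Fin n → ℝ) : dirichletEnergy C f = 2 * (f ⬝ᵥ lap C *ᵥ f) := by
  rw [two_mul_dotProduct_lap_mulVec hC, dirichletEnergy]
  simp only [sq, mul_assoc]

lemma dotProduct_single_sub_single (f : Fin n → ℝ) (a b : Fin n) :
    f ⬝ᵥ (Pi.single a 1 - Pi.single b 1) = f a - f b := by
  simp [dotProduct_sub]

lemma sq_sub_le_mul_dirichletEnergy {C : Matrix (Fin n) (Fin n) ℝ} (hC : Cᵀ = C)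
    (hCnn : ∀ i j, 0 ≤ C i j) {a b : Fin n} {x : Fin n → ℝ}
    (hx : lap C *ᵥ x = Pi.single a 1 - Pi.single b 1) (f : Fin n → ℝ) :
    2 * (f a - f b) ^ 2 ≤ (x a - x b) * dirichletEnergy C f := by
  have hcs := sq_sum_mul_sub_mul_sub_le hCnn f x
  rw [← two_mul_dotProduct_lap_mulVec hC, dirichletEnergy_eq_two_mul hC x, hx,
    dotProduct_single_sub_single, dotProduct_single_sub_single] at hcs
  nlinarith

lemma eq_of_lap_mulVec_eq_zero {C : Matrix (Fin n) (Fin n) ℝ} (hC : Cᵀ = C)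
    (hCnn : ∀ i j, 0 ≤ C i j) {f : Fin n → ℝ} (hf : lap C *ᵥ f = 0) {i j : Fin n}
    (hij : C i j ≠ 0) : f i = f j := by
  have hE : dirichletEnergy C f = 0 := by
    rw [dirichletEnergy_eq_two_mul hC, hf, dotProduct_zero, mul_zero]
  have hrow := (Finset.sum_eq_zero_iff_of_nonneg fun i _ => Finset.sum_nonneg fun j _ =>
    mul_nonneg (hCnn i j) (sq_nonneg _)).mp hE i (Finset.mem_univ i)
  have hterm := (Finset.sum_eq_zero_iff_of_nonneg fun j _ =>
    mul_nonneg (hCnn i j) (sq_nonneg _)).mp hrow j (Finset.mem_univ j)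
  exact sub_eq_zero.mp (pow_eq_zero_iff two_ne_zero |>.mp ((mul_eq_zero.mp hterm).resolve_left hij))

lemma exists_lap_mulVec_eq {C : Matrix (Fin n) (Fin n) ℝ} (hC : Cᵀ = C)
    (hker : ∀ f, lap C *ᵥ f = 0 → ∀ i j, f i = f j) {e : Fin n → ℝ} (he : ∑ i, e i = 0) :
    ∃ x, lap C *ᵥ x = e := by
  have hsymm : (toEuclideanLin (lap C)).IsSymmetric :=
    isSymmetric_toEuclideanLin_iff.mpr (by simpa [IsHermitian] using lap_transpose hC)
  have hrange : WithLp.toLp 2 e ∈ LinearMap.range (toEuclideanLin (lap C)) := by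
    rw [← Submodule.orthogonal_orthogonal (LinearMap.range _), hsymm.orthogonal_range]
    intro k hk
    have hconst := hker k (by simpa using congrArg WithLp.ofLp (LinearMap.mem_ker.mp hk))
    rcases isEmpty_or_nonempty (Fin n) with _ | ⟨⟨i⟩⟩
    · simp [Subsingleton.elim k 0]
    · simp [PiLp.inner_apply, hconst _ i, ← Finset.sum_mul, he]
  obtain ⟨x, hx⟩ := hrange
  exact ⟨WithLp.ofLp x, by simpa using congrArg WithLp.ofLp hx⟩

lemma effRes_self (C : Matrix (Fin n) (Fin n) ℝ) (a : Fin n) : effRes C a a = 0 := by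
  simp [effRes]

lemma sub_le_mul_sub_of_dirichletEnergy_le {C C' : Matrix (Fin n) (Fin n) ℝ} (hC : Cᵀ = C)
    (hC' : C'ᵀ = C') (hC'nn : ∀ i j, 0 ≤ C' i j) {a b : Fin n} {x y : Fin n → ℝ}
    (hx : lap C *ᵥ x = Pi.single a 1 - Pi.single b 1)
    (hy : lap C' *ᵥ y = Pi.single a 1 - Pi.single b 1) {κ : ℝ} (hκ : 0 ≤ κ)
    (hE : ∀ f, dirichletEnergy C' f ≤ κ * dirichletEnergy C f) :
    x a - x b ≤ κ * (y a - y b) := by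
  have hEx : dirichletEnergy C x = 2 * (x a - x b) := by
    rw [dirichletEnergy_eq_two_mul hC, hx, dotProduct_single_sub_single]
  have hEy : dirichletEnergy C' y = 2 * (y a - y b) := by
    rw [dirichletEnergy_eq_two_mul hC', hy, dotProduct_single_sub_single]
  have hy_nonneg : 0 ≤ y a - y b := by linarith [dirichletEnergy_nonneg hC'nn y]
  have hprinciple := sq_sub_le_mul_dirichletEnergy hC' hC'nn hy x
  have hcompare := mul_le_mul_of_nonneg_left (hE x) hy_nonneg
  rw [hEx] at hcompare
  have hsq : (x a - x b) ^ 2 ≤ κ * (y a - y b) * (x a - x b) := by linarith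
  rcases le_or_gt (x a - x b) 0 with hR | hR
  · exact hR.trans (mul_nonneg hκ hy_nonneg)
  · nlinarith

lemma effRes_le_mul_effRes {C C' : Matrix (Fin n) (Fin n) ℝ} (hC : Cᵀ = C)
    (hC' : C'ᵀ = C') (hC'nn : ∀ i j, 0 ≤ C' i j) {a b : Fin n}
    (hsol : ∃ x, lap C *ᵥ x = Pi.single a 1 - Pi.single b 1)
    (hsol' : ∃ y, lap C' *ᵥ y = Pi.single a 1 - Pi.single b 1) {κ : ℝ} (hκ : 0 ≤ κ)
    (hE : ∀ f, dirichletEnergy C' f ≤ κ * dirichletEnergy C f) :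
    effRes C a b ≤ κ * effRes C' a b := by
  rw [effRes, effRes, dif_pos hsol, dif_pos hsol']
  exact sub_le_mul_sub_of_dirichletEnergy_le hC hC' hC'nn hsol.choose_spec hsol'.choose_spec hκ hE

end Laplacian

section AdjacencyMatrix

variable {n : ℕ}

lemma adjMat_transpose (P : Matrix (Fin n) (Fin n) ℝ) : (adjMat P)ᵀ = adjMat P := by
  ext i j
  simp only [transpose_apply, adjMat, of_apply, ne_comm (a := j), or_comm]

lemma adjMat_nonneg (P : Matrix (Fin n) (Fin n) ℝ) (i j : Fin n) : 0 ≤ adjMat P i j := by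
  simp only [adjMat, of_apply]
  split_ifs <;> norm_num

lemma adjMat_le_one (P : Matrix (Fin n) (Fin n) ℝ) (i j : Fin n) : adjMat P i j ≤ 1 := by
  simp only [adjMat, of_apply]
  split_ifs <;> norm_num

lemma adjMat_ne_zero_iff {P : Matrix (Fin n) (Fin n) ℝ} {i j : Fin n} :
    adjMat P i j ≠ 0 ↔ i ≠ j ∧ (P i j ≠ 0 ∨ P j i ≠ 0) := by
  simp only [adjMat, of_apply]
  split_ifs with h <;> simp [h]

lemma adjMat_eq_one {P : Matrix (Fin n) (Fin n) ℝ} {i j : Fin n} (hij : i ≠ j)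
    (h : P i j ≠ 0) : adjMat P i j = 1 := by
  simp [adjMat, hij, h]

lemma adjMat_mono {P Q : Matrix (Fin n) (Fin n) ℝ} (h : ∀ i j, P i j ≠ 0 → Q i j ≠ 0)
    (i j : Fin n) : adjMat P i j ≤ adjMat Q i j := by
  simp only [adjMat, of_apply]
  split_ifs with hP hQ
  · rfl
  · exact absurd ⟨hP.1, hP.2.imp (h i j) (h j i)⟩ hQ
  · norm_num
  · rfl

lemma exists_lap_mulVec_eq_single_sub_single {P C : Matrix (Fin n) (Fin n) ℝ}
    (hirr : ∀ i j, ∃ k : ℕ, 0 < (P ^ k) i j) (hC : Cᵀ = C) (hCnn : ∀ i j, 0 ≤ C i j)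
    (hPC : ∀ i j, adjMat P i j ≤ C i j) (a b : Fin n) :
    ∃ x, lap C *ᵥ x = Pi.single a 1 - Pi.single b 1 := by
  refine exists_lap_mulVec_eq hC (fun f hf => eq_of_irreducible hirr fun i j hPij => ?_)
    (by simp [Finset.sum_sub_distrib])
  rcases eq_or_ne i j with rfl | hij
  · rfl
  · refine eq_of_lap_mulVec_eq_zero hC hCnn hf (ne_of_gt ?_)
    calc (0 : ℝ) < adjMat P i j := by rw [adjMat_eq_one hij hPij]; exact one_pos
      _ ≤ C i j := hPC i j

noncomputable def outNbrs (P : Matrix (Fin n) (Fin n) ℝ) (i : Fin n) : Finset (Fin n) :=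
  Finset.univ.filter fun j => j ≠ i ∧ P i j ≠ 0

lemma card_outNbrs (P : Matrix (Fin n) (Fin n) ℝ) (i : Fin n) :
    (outNbrs P i).card = outDeg P i := rfl

lemma mem_outNbrs {P : Matrix (Fin n) (Fin n) ℝ} {i j : Fin n} :
    j ∈ outNbrs P i ↔ j ≠ i ∧ P i j ≠ 0 := by
  simp [outNbrs]

lemma mem_insert_outNbrs {P : Matrix (Fin n) (Fin n) ℝ} {w u : Fin n} (h : P w u ≠ 0) :
    u ∈ insert w (outNbrs P w) := by
  rcases eq_or_ne u w with rfl | huw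
  · exact Finset.mem_insert_self _ _
  · exact Finset.mem_insert_of_mem (mem_outNbrs.mpr ⟨huw, h⟩)

lemma exists_one_le_outDeg {P : Matrix (Fin n) (Fin n) ℝ}
    (hirr : ∀ i j, ∃ k : ℕ, 0 < (P ^ k) i j) {u v : Fin n} (huv : u ≠ v) :
    ∃ i, 1 ≤ outDeg P i := by
  by_contra! h
  refine huv (eq_of_irreducible hirr (f := id) (fun i j hij => ?_) u v)
  by_contra hne
  have := Finset.card_pos.mpr ⟨j, mem_outNbrs.mpr ⟨Ne.symm hne, hij⟩⟩
  rw [card_outNbrs] at this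
  exact (h i).not_ge this

lemma sum_outNbrs_sq_le (P : Matrix (Fin n) (Fin n) ℝ) (f : Fin n → ℝ) (w : Fin n) :
    ∑ v ∈ outNbrs P w, (f w - f v) ^ 2 ≤ ∑ v, adjMat P w v * (f w - f v) ^ 2 := by
  calc ∑ v ∈ outNbrs P w, (f w - f v) ^ 2 = ∑ v ∈ outNbrs P w, adjMat P w v * (f w - f v) ^ 2 :=
        Finset.sum_congr rfl fun v hv => by
          obtain ⟨hvw, hwv⟩ := mem_outNbrs.mp hv
          rw [adjMat_eq_one (Ne.symm hvw) hwv, one_mul]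
    _ ≤ ∑ v, adjMat P w v * (f w - f v) ^ 2 :=
        Finset.sum_le_sum_of_subset_of_nonneg (Finset.subset_univ _) fun v _ _ =>
          mul_nonneg (adjMat_nonneg P w v) (sq_nonneg _)

lemma Pstar_mul_apply (P : Matrix (Fin n) (Fin n) ℝ) (mu : Fin n → ℝ) (u v : Fin n) :
    (Pstar P mu * P) u v = ∑ w, (mu u)⁻¹ * P w u * (mu w * P w v) := by
  rw [Pstar, mul_apply]
  simp only [mul_diagonal, diagonal_mul, transpose_apply]
  exact Finset.sum_congr rfl fun w _ => by ring

lemma Pstar_mul_apply_ne_zero_iff {P : Matrix (Fin n) (Fin n) ℝ} {mu : Fin n → ℝ}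
    (hP : ∀ i j, 0 ≤ P i j) (hmu : ∀ i, 0 < mu i) (u v : Fin n) :
    (Pstar P mu * P) u v ≠ 0 ↔ ∃ w, P w u ≠ 0 ∧ P w v ≠ 0 := by
  rw [Pstar_mul_apply, Ne, Finset.sum_eq_zero_iff_of_nonneg fun w _ =>
    mul_nonneg (mul_nonneg (inv_nonneg.mpr (hmu u).le) (hP w u)) (mul_nonneg (hmu w).le (hP w v))]
  simp [(hmu _).ne']

lemma adjMat_le_adjMat_Pstar_mul {P : Matrix (Fin n) (Fin n) ℝ} {mu : Fin n → ℝ}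
    (hP : ∀ i j, 0 ≤ P i j) (hmu : ∀ i, 0 < mu i) (hdiag : ∀ i, 0 < P i i) (i j : Fin n) :
    adjMat P i j ≤ adjMat (Pstar P mu * P) i j :=
  adjMat_mono (fun i j hij =>
    (Pstar_mul_apply_ne_zero_iff hP hmu i j).mpr ⟨i, (hdiag i).ne', hij⟩) i j

lemma exists_pivot_of_adjMat_Pstar_mul_ne_zero {P : Matrix (Fin n) (Fin n) ℝ}
    {mu : Fin n → ℝ} (hP : ∀ i j, 0 ≤ P i j) (hmu : ∀ i, 0 < mu i) {u v : Fin n}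
    (h : adjMat (Pstar P mu * P) u v ≠ 0) : ∃ w, P w u ≠ 0 ∧ P w v ≠ 0 := by
  rcases (adjMat_ne_zero_iff.mp h).2 with h | h
  · exact (Pstar_mul_apply_ne_zero_iff hP hmu u v).mp h
  · obtain ⟨w, hwv, hwu⟩ := (Pstar_mul_apply_ne_zero_iff hP hmu v u).mp h
    exact ⟨w, hwu, hwv⟩

lemma dirichletEnergy_adjMat_Pstar_mul_le_sum {P : Matrix (Fin n) (Fin n) ℝ}
    {mu : Fin n → ℝ} (hP : ∀ i j, 0 ≤ P i j) (hmu : ∀ i, 0 < mu i) (f : Fin n → ℝ) :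
    dirichletEnergy (adjMat (Pstar P mu * P)) f ≤
      ∑ w, ∑ u ∈ insert w (outNbrs P w), ∑ v ∈ insert w (outNbrs P w), (f u - f v) ^ 2 := by
  set N : Fin n → Finset (Fin n) := fun w => insert w (outNbrs P w)
  have hpivot : ∀ u v, adjMat (Pstar P mu * P) u v * (f u - f v) ^ 2 ≤
      ∑ w, if u ∈ N w ∧ v ∈ N w then (f u - f v) ^ 2 else 0 := by
    intro u v
    have hnn : ∀ w ∈ Finset.univ, 0 ≤ if u ∈ N w ∧ v ∈ N w then (f u - f v) ^ 2 else 0 :=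
      fun w _ => by split_ifs <;> positivity
    by_cases h : adjMat (Pstar P mu * P) u v = 0
    · rw [h, zero_mul]
      exact Finset.sum_nonneg hnn
    obtain ⟨w, hwu, hwv⟩ := exists_pivot_of_adjMat_Pstar_mul_ne_zero hP hmu h
    calc adjMat (Pstar P mu * P) u v * (f u - f v) ^ 2 ≤ (f u - f v) ^ 2 :=
          mul_le_of_le_one_left (sq_nonneg _) (adjMat_le_one _ u v)
      _ = if u ∈ N w ∧ v ∈ N w then (f u - f v) ^ 2 else 0 :=
          (if_pos ⟨mem_insert_outNbrs hwu, mem_insert_outNbrs hwv⟩).symm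
      _ ≤ _ := Finset.single_le_sum hnn (Finset.mem_univ w)
  calc dirichletEnergy (adjMat (Pstar P mu * P)) f
      ≤ ∑ u, ∑ v, ∑ w, if u ∈ N w ∧ v ∈ N w then (f u - f v) ^ 2 else 0 :=
        Finset.sum_le_sum fun u _ => Finset.sum_le_sum fun v _ => hpivot u v
    _ = ∑ w, ∑ u, ∑ v, if u ∈ N w ∧ v ∈ N w then (f u - f v) ^ 2 else 0 :=
        (Finset.sum_congr rfl fun _ _ => Finset.sum_comm).trans Finset.sum_comm
    _ = ∑ w, ∑ u ∈ N w, ∑ v ∈ N w, (f u - f v) ^ 2 := by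
        simp only [ite_and, Finset.sum_ite_irrel, Finset.sum_const_zero, Fintype.sum_ite_mem]

lemma dirichletEnergy_adjMat_Pstar_mul_le {P : Matrix (Fin n) (Fin n) ℝ}
    {mu : Fin n → ℝ} (hP : ∀ i j, 0 ≤ P i j) (hmu : ∀ i, 0 < mu i) {d : ℕ}
    (hd : ∀ i, outDeg P i ≤ d) (hd1 : 1 ≤ d) (f : Fin n → ℝ) :
    dirichletEnergy (adjMat (Pstar P mu * P)) f ≤ (4 * d - 2) * dirichletEnergy (adjMat P) f := by
  have hκ : (0 : ℝ) ≤ 4 * d - 2 := by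
    have : (1 : ℝ) ≤ d := by exact_mod_cast hd1
    linarith
  calc dirichletEnergy (adjMat (Pstar P mu * P)) f
      ≤ ∑ w, ∑ u ∈ insert w (outNbrs P w), ∑ v ∈ insert w (outNbrs P w), (f u - f v) ^ 2 :=
        dirichletEnergy_adjMat_Pstar_mul_le_sum hP hmu f
    _ ≤ ∑ w, (4 * d - 2) * ∑ v ∈ outNbrs P w, (f w - f v) ^ 2 := by
        gcongr with w
        refine (sum_insert_sum_insert_sq_sub_le f fun h => (mem_outNbrs.mp h).1 rfl).trans ?_
        gcongr
        rw [card_outNbrs]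
        exact_mod_cast hd w
    _ ≤ ∑ w, (4 * d - 2) * ∑ v, adjMat P w v * (f w - f v) ^ 2 := by
        gcongr with w
        exact sum_outNbrs_sq_le P f w
    _ = (4 * d - 2) * dirichletEnergy (adjMat P) f := by
        rw [dirichletEnergy, Finset.mul_sum]

end AdjacencyMatrix

/-- Back-and-forth path bound:
`(1/(4δ_out − 2)) R_{uv}(G(P)) ≤ R_{uv}(G(P*P)) ≤ R_{uv}(G(P))`. -/
theorem stmt15 {n : ℕ} (P : Matrix (Fin n) (Fin n) ℝ) (mu : Fin n → ℝ)
    (hP : IsConsensus P) (hmu : IsInvMeasure P mu)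
    (dout : ℕ) (hdout : (∀ i, outDeg P i ≤ dout) ∧ ∃ i, outDeg P i = dout) :
    ∀ u v : Fin n,
      (1 / (4 * (dout : ℝ) - 2)) * effRes (adjMat P) u v ≤
          effRes (adjMat (Pstar P mu * P)) u v ∧
        effRes (adjMat (Pstar P mu * P)) u v ≤ effRes (adjMat P) u v := by
  obtain ⟨hPnn, -, hirr, hdiag⟩ := hP
  intro u v
  rcases eq_or_ne u v with rfl | huv
  · simp [effRes_self]
  have hd : 1 ≤ dout :=
    let ⟨i, hi⟩ := exists_one_le_outDeg hirr huv
    hi.trans (hdout.1 i)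
  have hκ : (0 : ℝ) < 4 * dout - 2 := by
    have : (1 : ℝ) ≤ dout := by exact_mod_cast hd
    linarith
  have hle := adjMat_le_adjMat_Pstar_mul (mu := mu) hPnn hmu.1 hdiag
  have hsol := exists_lap_mulVec_eq_single_sub_single hirr (adjMat_transpose P)
    (adjMat_nonneg P) (fun _ _ => le_rfl) u v
  have hsol' := exists_lap_mulVec_eq_single_sub_single hirr (adjMat_transpose _)
    (adjMat_nonneg _) hle u v
  constructor
  · rw [one_div_mul_eq_div, div_le_iff₀' hκ]
    exact effRes_le_mul_effRes (adjMat_transpose _) (adjMat_transpose _) (adjMat_nonneg _)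
      hsol hsol' hκ.le (dirichletEnergy_adjMat_Pstar_mul_le hPnn hmu.1 hdout.1 hd)
  · simpa using effRes_le_mul_effRes (adjMat_transpose _) (adjMat_transpose _) (adjMat_nonneg _)
      hsol' hsol zero_le_one fun f => by simpa using dirichletEnergy_mono hle f
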